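/- arXiv:2309.05377 — 6 statements merged into one kernel-verified Lean document; each statement's English description precedes it below -/
import Mathlib

section
/- For every n ≥ 1, every k ∈ {1, …, n}, every profile s = (s_1, …, s_n) ∈ ℝ^n, every agent i, and every misreport s_i' ∈ ℝ, it holds that min(1, |o_k(s) − s_i|) ≤ min(1, |o_k(s_{-i}, s_i') − s_i|); that is, every k-th ordered statistic mechanism is truthful in the unit-length Truthful Interval Covering model. -/
/-!
An order statistic is pinned down by counting: `oStat s k ≤ a` iff more than `k` entries are
`≤ a`, and `a ≤ oStat s k` iff at most `k` entries are `< a`. If `s i` lies strictly below the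
statistic, no report of agent `i` can add an entry below it, so the statistic cannot move down
towards `s i`; symmetrically from above. Hence the distance `|oStat - s i|`, and with it the cost,
can only grow under a misreport.
-/

/-- The `k`-th ordered statistic (0-indexed) of a profile `s` of left endpoints:
the value of `s` at the `k`-th position after sorting in non-decreasing order. -/
noncomputable def oStat {n : ℕ} (s : Fin n → ℝ) (k : Fin n) : ℝ :=
  s (Tuple.sort s k)

open Finset

theorem Fin.val_lt_card_iff_mem_of_isLowerSet {n : ℕ} {T : Finset (Fin n)}
    (hT : IsLowerSet (T : Set (Fin n))) (k : Fin n) : k.val < #T ↔ k ∈ T := by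
  constructor
  · intro hk
    by_contra hkT
    have hsub : T ⊆ Iio k := fun j hj => mem_Iio.2 (lt_of_not_ge fun hkj => hkT (hT hkj hj))
    have := card_le_card hsub
    rw [Fin.card_Iio] at this
    omega
  · intro hkT
    have hsub : Iic k ⊆ T := fun j hj => hT (mem_Iic.1 hj) hkT
    have := card_le_card hsub
    rw [Fin.card_Iic] at this
    omega

theorem oStat_mem_iff_lt_card {n : ℕ} (s : Fin n → ℝ) (k : Fin n) {S : Set ℝ}
    [DecidablePred (· ∈ S)] (hS : IsLowerSet S) : oStat s k ∈ S ↔ k.val < #{j | s j ∈ S} := by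
  set σ := Tuple.sort s
  have hsorted : IsLowerSet (({j | s (σ j) ∈ S} : Finset (Fin n)) : Set (Fin n)) := by
    rw [coe_filter_univ]
    exact hS.preimage (Tuple.monotone_sort s)
  have hcard : #{j | s (σ j) ∈ S} = #{j | s j ∈ S} := card_equiv σ fun j => by simp
  rw [← hcard, Fin.val_lt_card_iff_mem_of_isLowerSet hsorted]
  simp [oStat, σ]

theorem oStat_le_iff_lt_card {n : ℕ} (s : Fin n → ℝ) (k : Fin n) (a : ℝ) :
    oStat s k ≤ a ↔ k.val < #{j | s j ≤ a} :=
  oStat_mem_iff_lt_card s k (isLowerSet_Iic a)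

theorem le_oStat_iff_card_le {n : ℕ} (s : Fin n → ℝ) (k : Fin n) (a : ℝ) :
    a ≤ oStat s k ↔ #{j | s j < a} ≤ k.val := by
  rw [← not_lt, ← not_lt]
  exact not_congr (oStat_mem_iff_lt_card s k (isLowerSet_Iio a))

theorem oStat_le_oStat_update_of_apply_lt {n : ℕ} {s : Fin n → ℝ} {k i : Fin n}
    (h : s i < oStat s k) (x : ℝ) : oStat s k ≤ oStat (Function.update s i x) k := by
  rw [le_oStat_iff_card_le]
  refine (card_le_card fun j => ?_).trans ((le_oStat_iff_card_le s k _).1 le_rfl)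
  rcases eq_or_ne j i with rfl | hji
  · simp [h]
  · simp [Function.update_of_ne hji]

theorem oStat_update_le_oStat_of_lt_apply {n : ℕ} {s : Fin n → ℝ} {k i : Fin n}
    (h : oStat s k < s i) (x : ℝ) : oStat (Function.update s i x) k ≤ oStat s k := by
  rw [oStat_le_iff_lt_card]
  refine ((oStat_le_iff_lt_card s k _).1 le_rfl).trans_le (card_le_card fun j hj => ?_)
  have hji : j ≠ i := by
    rintro rfl
    exact (mem_filter.1 hj).2.not_gt h
  simpa [Function.update_of_ne hji] using hj

theorem abs_oStat_sub_le_abs_oStat_update_sub {n : ℕ} (s : Fin n → ℝ) (k i : Fin n) (x : ℝ) :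
    |oStat s k - s i| ≤ |oStat (Function.update s i x) k - s i| := by
  rcases lt_trichotomy (s i) (oStat s k) with h | h | h
  · have := oStat_le_oStat_update_of_apply_lt h x
    rw [abs_of_pos (by linarith), abs_of_pos (by linarith)]
    linarith
  · simp [h]
  · have := oStat_update_le_oStat_of_lt_apply h x
    rw [abs_of_neg (by linarith), abs_of_neg (by linarith)]
    linarith

theorem kth_ordered_statistic_truthful_general (n : ℕ) (k : Fin n)
    (s : Fin n → ℝ) (i : Fin n) (s' : ℝ) :
    min 1 |oStat s k - s i| ≤ min 1 |oStat (Function.update s i s') k - s i| :=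
  min_le_min_left 1 (abs_oStat_sub_le_abs_oStat_update_sub s k i s')

/-- Every `k`-th ordered statistic mechanism is truthful in the unit-length
Truthful Interval Covering model: no agent `i` can decrease her cost
`min 1 |c - s i|` by misreporting her left endpoint. -/
theorem kth_ordered_statistic_truthful (n : ℕ) (hn : 1 ≤ n) (k : Fin n)
    (s : Fin n → ℝ) (i : Fin n) (s' : ℝ) :
    min 1 |oStat s k - s i| ≤ min 1 |oStat (Function.update s i s') k - s i| :=
  kth_ordered_statistic_truthful_general n k s i s'
end

section
/- For every n ≥ 1, every vector of probabilities p_1, …, p_n ≥ 0 with Σ_k p_k = 1, every profile s ∈ ℝ^n, every agent i, and every misreport s_i' ∈ ℝ, it holds that Σ_{k=1}^n p_k · min(1, |o_k(s) − s_i|) ≤ Σ_{k=1}^n p_k · min(1, |o_k(s_{-i}, s_i') − s_i|); that is, every convex combination of k-th ordered statistic mechanisms is truthful in expectation (indeed universally truthful) in the unit-length Truthful Interval Covering model. -/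
open Finset

namespace Tuple

variable {α : Type*} [LinearOrder α] {n : ℕ}

theorem apply_sort_le_iff_lt_card (f : Fin n → α) (k : Fin n) (a : α) :
    f (sort f k) ≤ a ↔ k < #{i | f i ≤ a} := by
  rw [← card_equiv (sort f) (s := {i | f (sort f i) ≤ a}) (by simp)]
  exact (lt_card_le_iff_apply_le_of_monotone (f := f ∘ sort f) (monotone_sort f)).symm

theorem apply_sort_le_of_imp {f g : Fin n → α} {a : α} (h : ∀ j, f j ≤ a → g j ≤ a)
    (k : Fin n) (hf : f (sort f k) ≤ a) : g (sort g k) ≤ a := by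
  rw [apply_sort_le_iff_lt_card] at hf ⊢
  exact hf.trans_le (card_le_card fun j hj => by simp_all)

end Tuple

theorem oStat_mem_uIcc_oStat_update {n : ℕ} (s : Fin n → ℝ) (i : Fin n) (s' : ℝ) (k : Fin n) :
    oStat s k ∈ Set.uIcc (s i) (oStat (Function.update s i s') k) := by
  set u := Function.update s i s'
  have hu : ∀ j, j ≠ i → u j = s j := fun j hj => Function.update_of_ne hj _ _
  by_cases hlt : oStat s k < s i
  · have hle : oStat u k ≤ oStat s k := by
      refine Tuple.apply_sort_le_of_imp (fun j hj => ?_) k le_rfl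
      have hji : j ≠ i := by rintro rfl; exact hlt.not_ge hj
      rwa [hu j hji]
    exact Set.mem_uIcc.2 (Or.inr ⟨hle, hlt.le⟩)
  · push Not at hlt
    have hle : oStat s k ≤ max (oStat u k) (s i) := by
      refine Tuple.apply_sort_le_of_imp (fun j hj => ?_) k (le_max_left _ _)
      by_cases hji : j = i
      · exact hji ▸ le_max_right _ _
      · rwa [← hu j hji]
    rcases le_max_iff.1 hle with hb | hsi
    · exact Set.mem_uIcc.2 (Or.inl ⟨hlt, hb⟩)
    · exact le_antisymm hsi hlt ▸ Set.left_mem_uIcc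

theorem convex_comb_ordered_statistics_truthful_general (n : ℕ)
    (p : Fin n → ℝ) (hp : ∀ k, 0 ≤ p k)
    (s : Fin n → ℝ) (i : Fin n) (s' : ℝ) :
    ∑ k, p k * min 1 |oStat s k - s i| ≤
      ∑ k, p k * min 1 |oStat (Function.update s i s') k - s i| :=
  sum_le_sum fun k _ => mul_le_mul_of_nonneg_left
    (min_le_min_left 1 (Set.abs_sub_left_of_mem_uIcc (oStat_mem_uIcc_oStat_update s i s' k))) (hp k)

/-- Every convex combination of `k`-th ordered statistic mechanisms is truthful
(in expectation) in the unit-length Truthful Interval Covering model: no agent `i`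
can decrease her expected cost by misreporting her left endpoint. -/
theorem convex_comb_ordered_statistics_truthful (n : ℕ) (hn : 1 ≤ n)
    (p : Fin n → ℝ) (hp : ∀ k, 0 ≤ p k) (hsum : ∑ k, p k = 1)
    (s : Fin n → ℝ) (i : Fin n) (s' : ℝ) :
    ∑ k, p k * min 1 |oStat s k - s i| ≤
      ∑ k, p k * min 1 |oStat (Function.update s i s') k - s i| :=
  convex_comb_ordered_statistics_truthful_general n p hp s i s'
end

section
/- Let n ≥ 1, let [a_1, b_1], …, [a_n, b_n] be closed intervals with a_i ≤ b_i for all i, and let L > 0 be the length of the covering interval. Define the social cost of a position c ∈ ℝ as SC(c) = Σ_{i=1}^n ((b_i − a_i) − max(0, min(b_i, c + L) − max(a_i, c))). Then there exists a position c* belonging to the finite set {a_1, …, a_n} ∪ {b_1 − L, …, b_n − L} such that SC(c*) ≤ SC(c) for every c ∈ ℝ; i.e., some social-cost-minimizing covering interval starts at a left endpoint or ends at a right endpoint of an agent's interval. -/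
/-!
The social cost is `∑ i, (b i - a i)` minus the total covered length, so it suffices to maximise
the latter. The length of `[A, B] ∩ [c, c + L]` is nondecreasing in `c` while `c ≤ A` and
nonincreasing once `B - L ≤ c`; on an interval containing neither `A` nor `B - L` in its
interior, both `max A c` and `min B (c + L)` are affine in `c`, so the covered length is the
positive part of an affine function and hence convex there. Summing over the agents, the total
covered length is monotone below and antitone above the finite set `S = {a i} ∪ {b i - L}` and
convex between consecutive points of `S`, and a convex function on a segment is maximal at an
endpoint.
-/

open Set

theorem convexOn_finset_sum {𝕜 E β ι : Type*} [Semiring 𝕜] [PartialOrder 𝕜]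
    [AddCommMonoid E] [SMul 𝕜 E] [AddCommMonoid β] [PartialOrder β] [IsOrderedAddMonoid β]
    [Module 𝕜 β]
    {s : Set E} (hs : Convex 𝕜 s) (t : Finset ι) {f : ι → E → β}
    (hf : ∀ i ∈ t, ConvexOn 𝕜 s (f i)) : ConvexOn 𝕜 s fun x => ∑ i ∈ t, f i x := by
  classical
  induction t using Finset.induction_on with
  | empty => simpa using convexOn_const 0 hs
  | insert j t hj ih =>
    simp only [Finset.sum_insert hj]
    exact (hf j (Finset.mem_insert_self j t)).add
      (ih fun i hi => hf i (Finset.mem_insert_of_mem hi))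

theorem Finset.exists_mem_isMaxOn_of_convexOn_gaps {𝕜 β : Type*} [Field 𝕜] [LinearOrder 𝕜]
    [IsStrictOrderedRing 𝕜] [AddCommGroup β] [LinearOrder β] [IsOrderedAddMonoid β]
    [Module 𝕜 β] [IsStrictOrderedModule 𝕜 β] {S : Finset 𝕜} (hS : S.Nonempty)
    {f : 𝕜 → β}
    (hlow : MonotoneOn f (lowerBounds S)) (hupp : AntitoneOn f (upperBounds S))
    (hgap : ∀ x y, (∀ s ∈ S, s ≤ x ∨ y ≤ s) → ConvexOn 𝕜 (Set.Icc x y) f) :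
    ∃ c ∈ S, IsMaxOn f Set.univ c := by
  classical
  obtain ⟨c', hc'S, hc'max⟩ := S.exists_max_image f hS
  refine ⟨c', hc'S, fun c _ => ?_⟩
  by_cases hbelow : (S.filter (· ≤ c)).Nonempty
  · by_cases habove : (S.filter (c ≤ ·)).Nonempty
    · set x := (S.filter (· ≤ c)).max' hbelow
      set y := (S.filter (c ≤ ·)).min' habove
      obtain ⟨hxS, hxc⟩ := Finset.mem_filter.1 ((S.filter (· ≤ c)).max'_mem hbelow)
      obtain ⟨hyS, hcy⟩ := Finset.mem_filter.1 ((S.filter (c ≤ ·)).min'_mem habove)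
      have hconv : ConvexOn 𝕜 (Set.Icc x y) f := hgap x y fun s hs => (le_total s c).imp
        (fun h => (S.filter (· ≤ c)).le_max' s (Finset.mem_filter.2 ⟨hs, h⟩))
        (fun h => (S.filter (c ≤ ·)).min'_le s (Finset.mem_filter.2 ⟨hs, h⟩))
      have hxy : x ≤ y := hxc.trans hcy
      calc f c ≤ max (f x) (f y) :=
            hconv.le_max_of_mem_Icc ⟨le_rfl, hxy⟩ ⟨hxy, le_rfl⟩ ⟨hxc, hcy⟩
        _ ≤ f c' := max_le (hc'max x hxS) (hc'max y hyS)
    · have hc : c ∈ upperBounds (S : Set 𝕜) := fun s hs =>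
        le_of_not_ge fun h => habove ⟨s, Finset.mem_filter.2 ⟨hs, h⟩⟩
      have hmax : S.max' hS ∈ upperBounds (S : Set 𝕜) := fun s hs => S.le_max' s hs
      exact (hupp hmax hc (hc (S.max'_mem hS))).trans (hc'max _ (S.max'_mem hS))
  · have hc : c ∈ lowerBounds (S : Set 𝕜) := fun s hs =>
      le_of_not_ge fun h => hbelow ⟨s, Finset.mem_filter.2 ⟨hs, h⟩⟩
    have hmin : S.min' hS ∈ lowerBounds (S : Set 𝕜) := fun s hs => S.min'_le s hs
    exact (hlow hc hmin (hc (S.min'_mem hS))).trans (hc'max _ (S.min'_mem hS))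

/-- The length of `[A, B] ∩ [c, c + L]`. -/
def coverage (A B L c : ℝ) : ℝ := max 0 (min B (c + L) - max A c)

theorem coverage_monotoneOn (A B L : ℝ) : MonotoneOn (coverage A B L) (Iic A) := by
  intro c hc d hd hcd
  simp only [coverage, max_eq_left (mem_Iic.1 hc), max_eq_left (mem_Iic.1 hd)]
  gcongr

theorem coverage_antitoneOn (A B L : ℝ) : AntitoneOn (coverage A B L) (Ici (B - L)) := by
  intro c hc d hd hcd
  have hc' : B ≤ c + L := by linarith [mem_Ici.1 hc]
  have hd' : B ≤ d + L := by linarith [mem_Ici.1 hd]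
  simp only [coverage, min_eq_left hc', min_eq_left hd']
  gcongr

theorem convexOn_Icc_min_add (B L : ℝ) {x y : ℝ} (h : B - L ≤ x ∨ y ≤ B - L) :
    ConvexOn ℝ (Icc x y) fun c => min B (c + L) := by
  rcases h with h | h
  · refine (convexOn_const B (convex_Icc x y)).congr fun c hc => ?_
    exact (min_eq_left (by linarith [hc.1])).symm
  · refine ((convexOn_id (convex_Icc x y)).add_const L).congr fun c hc => ?_
    show c + L = min B (c + L)
    exact (min_eq_right (by linarith [hc.2])).symm

theorem concaveOn_Icc_max (A : ℝ) {x y : ℝ} (h : A ≤ x ∨ y ≤ A) :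
    ConcaveOn ℝ (Icc x y) fun c => max A c := by
  rcases h with h | h
  · exact (concaveOn_id (convex_Icc x y)).congr fun c hc => (max_eq_right (h.trans hc.1)).symm
  · exact (concaveOn_const A (convex_Icc x y)).congr fun c hc => (max_eq_left (hc.2.trans h)).symm

theorem coverage_convexOn_Icc (A B L : ℝ) {x y : ℝ} (hA : A ≤ x ∨ y ≤ A)
    (hB : B - L ≤ x ∨ y ≤ B - L) : ConvexOn ℝ (Icc x y) (coverage A B L) :=
  (convexOn_const 0 (convex_Icc x y)).sup
    ((convexOn_Icc_min_add B L hB).sub (concaveOn_Icc_max A hA))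

theorem interval_covering_optimum_at_endpoint_general (n : ℕ) (hn : 1 ≤ n)
    (a b : Fin n → ℝ) (L : ℝ) :
    ∃ c' : ℝ, (∃ i : Fin n, c' = a i ∨ c' = b i - L) ∧
      ∀ c : ℝ,
        (∑ i, ((b i - a i) - max 0 (min (b i) (c' + L) - max (a i) c'))) ≤
        (∑ i, ((b i - a i) - max 0 (min (b i) (c + L) - max (a i) c))) := by
  classical
  set S : Finset ℝ := Finset.univ.image a ∪ Finset.univ.image fun i => b i - L
  have ha (i : Fin n) : a i ∈ S := by simp [S]
  have hb (i : Fin n) : b i - L ∈ S := by simp [S]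
  obtain ⟨c', hc'S, hc'max⟩ := Finset.exists_mem_isMaxOn_of_convexOn_gaps
    (f := fun c => ∑ i, coverage (a i) (b i) L c) ⟨a ⟨0, hn⟩, ha _⟩
    (fun c hc d hd hcd => Finset.sum_le_sum fun i _ =>
      coverage_monotoneOn _ _ _ (hc (ha i)) (hd (ha i)) hcd)
    (fun c hc d hd hcd => Finset.sum_le_sum fun i _ =>
      coverage_antitoneOn _ _ _ (hc (hb i)) (hd (hb i)) hcd)
    (fun x y hgap => convexOn_finset_sum (convex_Icc x y) _ fun i _ =>
      coverage_convexOn_Icc _ _ _ (hgap _ (ha i)) (hgap _ (hb i)))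
  refine ⟨c', by simpa [S, eq_comm, exists_or] using hc'S, fun c => ?_⟩
  have hcov : ∑ i, coverage (a i) (b i) L c ≤ ∑ i, coverage (a i) (b i) L c' :=
    hc'max (mem_univ c)
  simp only [coverage] at hcov
  simp only [Finset.sum_sub_distrib]
  linarith

/-- In the Interval Covering Problem with intervals `[a i, b i]` and a covering
interval of length `L > 0`, some social-cost-minimizing covering interval starts
at a left endpoint `a i` or ends at a right endpoint `b i` (i.e. starts at `b i - L`).
The social cost of position `c` is
`∑ i, ((b i - a i) - max 0 (min (b i) (c + L) - max (a i) c))`. -/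
theorem interval_covering_optimum_at_endpoint (n : ℕ) (hn : 1 ≤ n)
    (a b : Fin n → ℝ) (hab : ∀ i, a i ≤ b i) (L : ℝ) (hL : 0 < L) :
    ∃ c' : ℝ, (∃ i : Fin n, c' = a i ∨ c' = b i - L) ∧
      ∀ c : ℝ,
        (∑ i, ((b i - a i) - max 0 (min (b i) (c' + L) - max (a i) c'))) ≤
        (∑ i, ((b i - a i) - max 0 (min (b i) (c + L) - max (a i) c))) :=
  interval_covering_optimum_at_endpoint_general n hn a b L
end

section
/- For every n ≥ 1 and every profile s ∈ ℝ^n in the unit-length model, there exists an agent j such that placing the covering interval at s_j is optimal: Σ_{i=1}^n min(1, |s_j − s_i|) ≤ Σ_{i=1}^n min(1, |c − s_i|) for every c ∈ ℝ. -/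
/-!
Each term `t ↦ min 1 |t - s i|` of the social cost is concave on either side of `s i`. So on an
interval with no agent in its interior the social cost is concave and hence minimised at an
endpoint, while beyond the extreme agents it can only grow. Thus every position is dominated by
the position of some agent, and the best agent position is optimal.
-/

open Set Finset

theorem concaveOn_finset_sum {𝕜 E β ι : Type*} [Semiring 𝕜] [PartialOrder 𝕜] [AddCommMonoid E]
    [AddCommMonoid β] [PartialOrder β] [IsOrderedAddMonoid β] [SMul 𝕜 E] [Module 𝕜 β]
    {S : Set E} (hS : Convex 𝕜 S) (t : Finset ι) {f : ι → E → β}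
    (hf : ∀ i ∈ t, ConcaveOn 𝕜 S (f i)) : ConcaveOn 𝕜 S fun x => ∑ i ∈ t, f i x := by
  classical
  induction t using Finset.induction_on with
  | empty => simpa using concaveOn_const (0 : β) hS
  | insert i t hi ih =>
    simp_rw [Finset.sum_insert hi]
    exact (hf i (mem_insert_self i t)).add (ih fun j hj => hf j (mem_insert_of_mem hj))

theorem concaveOn_min_one_abs_sub_Ici (a : ℝ) : ConcaveOn ℝ (Ici a) fun t => min 1 |t - a| := by
  refine ((concaveOn_const 1 (convex_Ici a)).inf
    ((concaveOn_id (convex_Ici a)).add_const (-a))).congr fun t ht => ?_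
  simp [← sub_eq_add_neg, abs_of_nonneg (sub_nonneg.2 (mem_Ici.1 ht))]

theorem concaveOn_min_one_abs_sub_Iic (a : ℝ) : ConcaveOn ℝ (Iic a) fun t => min 1 |t - a| := by
  refine ((concaveOn_const 1 (convex_Iic a)).inf
    ((concaveOn_const a (convex_Iic a)).sub (convexOn_id (convex_Iic a)))).congr fun t ht => ?_
  simp [abs_of_nonpos (sub_nonpos.2 (mem_Iic.1 ht))]

noncomputable def socialCost {ι : Type*} [Fintype ι] (s : ι → ℝ) (c : ℝ) : ℝ :=
  ∑ i, min 1 |c - s i|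

section socialCost

variable {ι : Type*} [Fintype ι] (s : ι → ℝ)

theorem concaveOn_socialCost {x y : ℝ} (hs : ∀ i, s i ≤ x ∨ y ≤ s i) :
    ConcaveOn ℝ (Icc x y) (socialCost s) := by
  refine concaveOn_finset_sum (convex_Icc x y) univ fun i _ => ?_
  rcases hs i with h | h
  · exact (concaveOn_min_one_abs_sub_Ici (s i)).subset
      (Icc_subset_Ici_self.trans (Ici_subset_Ici.2 h)) (convex_Icc x y)
  · exact (concaveOn_min_one_abs_sub_Iic (s i)).subset
      (Icc_subset_Iic_self.trans (Iic_subset_Iic.2 h)) (convex_Icc x y)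

theorem socialCost_le_of_le_of_forall_le {x c : ℝ} (hcx : c ≤ x) (hx : ∀ i, x ≤ s i) :
    socialCost s x ≤ socialCost s c := by
  refine sum_le_sum fun i _ => min_le_min_left 1 ?_
  rw [abs_sub_comm x, abs_sub_comm c]
  exact abs_le_abs (by linarith) (by linarith [hx i])

theorem socialCost_le_of_le_of_forall_ge {x c : ℝ} (hxc : x ≤ c) (hx : ∀ i, s i ≤ x) :
    socialCost s x ≤ socialCost s c :=
  sum_le_sum fun i _ => min_le_min_left 1 (abs_le_abs (by linarith) (by linarith [hx i]))

theorem exists_socialCost_agent_le [Nonempty ι] (c : ℝ) :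
    ∃ k, socialCost s (s k) ≤ socialCost s c := by
  obtain ⟨lo, -, hlo⟩ := exists_min_image univ s univ_nonempty
  obtain ⟨hi, -, hhi⟩ := exists_max_image univ s univ_nonempty
  rcases le_or_gt c (s lo) with hc | hlo_c
  · exact ⟨lo, socialCost_le_of_le_of_forall_le s hc fun i => hlo i (mem_univ i)⟩
  rcases le_or_gt (s hi) c with hc | hc_hi
  · exact ⟨hi, socialCost_le_of_le_of_forall_ge s hc fun i => hhi i (mem_univ i)⟩
  obtain ⟨a, ha, hamax⟩ := exists_max_image {i | s i ≤ c} s ⟨lo, by simpa using hlo_c.le⟩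
  obtain ⟨b, hb, hbmin⟩ := exists_min_image {i | c ≤ s i} s ⟨hi, by simpa using hc_hi.le⟩
  rw [mem_filter_univ] at ha hb
  have hsep : ∀ i, s i ≤ s a ∨ s b ≤ s i := fun i => by
    rcases le_total (s i) c with h | h
    · exact Or.inl (hamax i (by simpa using h))
    · exact Or.inr (hbmin i (by simpa using h))
  have hab := ha.trans hb
  rcases min_le_iff.1 ((concaveOn_socialCost s hsep).min_le_of_mem_Icc
    (left_mem_Icc.2 hab) (right_mem_Icc.2 hab) ⟨ha, hb⟩) with h | h
  exacts [⟨a, h⟩, ⟨b, h⟩]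

theorem exists_agent_forall_socialCost_le [Nonempty ι] :
    ∃ j, ∀ c, socialCost s (s j) ≤ socialCost s c := by
  obtain ⟨j, -, hj⟩ := exists_min_image univ (fun k => socialCost s (s k)) univ_nonempty
  refine ⟨j, fun c => ?_⟩
  obtain ⟨k, hk⟩ := exists_socialCost_agent_le s c
  exact (hj k (mem_univ k)).trans hk

end socialCost

/-- In the unit-length Truthful Interval Covering model, for every profile `s`
there is an agent `j` such that placing the covering interval at `s j` minimizes
the social cost `∑ i, min 1 |c - s i|` over all positions `c`. -/
theorem optimal_covering_at_some_agent (n : ℕ) (hn : 1 ≤ n) (s : Fin n → ℝ) :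
    ∃ j : Fin n, ∀ c : ℝ,
      (∑ i, min 1 |s j - s i|) ≤ ∑ i, min 1 |c - s i| :=
  have : Nonempty (Fin n) := ⟨⟨0, hn⟩⟩
  exists_agent_forall_socialCost_le s
end

section
/- In the variable-length model with n = 2 agents and a covering interval of length 1, let f be any truthful deterministic mechanism. Then for every ε ∈ (0, 1), there exist an instance I = ([a_1, b_1], [a_2, b_2]) and a position c ∈ ℝ such that SC_I(c) > 0 and SC_I(f(I)) ≥ (1/ε) · SC_I(c); that is, when the interval lengths are unknown (reported by the agents), every truthful deterministic mechanism has approximation ratio at least 1/ε for every ε ∈ (0, 1). -/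
/-- Cost of an agent with interval `[a, b]` when the unit-length covering interval
is placed at `c`: the uncovered length `(b - a) - |[a, b] ∩ [c, c+1]|`. -/
noncomputable def icost (a b c : ℝ) : ℝ :=
  (b - a) - max 0 (min b (c + 1) - max a c)

/-- Social cost of a two-agent instance `I` (each agent is a pair of endpoints). -/
noncomputable def SC2 (I : Fin 2 → ℝ × ℝ) (c : ℝ) : ℝ :=
  ∑ i, icost (I i).1 (I i).2 c

/-- A deterministic mechanism for the variable-length model with two agents is
truthful if no agent with a valid true interval can decrease her true cost by
reporting any valid interval instead. -/
def Truthful2 (f : (Fin 2 → ℝ × ℝ) → ℝ) : Prop :=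
  ∀ (I : Fin 2 → ℝ × ℝ), (∀ i, (I i).1 ≤ (I i).2) →
    ∀ (i : Fin 2) (J : ℝ × ℝ), J.1 ≤ J.2 →
      icost (I i).1 (I i).2 (f I) ≤ icost (I i).1 (I i).2 (f (Function.update I i J))

/-!
Put two intervals of length `δ = ε/4` at distance 2. No unit window meets both, so the mechanism
leaves one agent, say with interval `[p, q]`, fully uncovered. If she instead reports
`[p - 1/4, q + 1/4]`, truthfulness forces the new window to stay off `[p, q]` as well, so it covers
at most `1/4` of the reported interval and the social cost of the new profile is at least
`δ + 1/4`, whereas the window at `p - 1/4` covers the reported interval and leaves only the other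
agent's `δ` uncovered. The ratio is at least `1/4 / δ = 1/ε`.
-/

lemma icost_nonneg {a b : ℝ} (hab : a ≤ b) (c : ℝ) : 0 ≤ icost a b c := by
  unfold icost
  have : min b (c + 1) - max a c ≤ b - a := by
    linarith [min_le_left b (c + 1), le_max_left a c]
  linarith [max_le (sub_nonneg.2 hab) this]

lemma icost_eq_sub_of_miss {a b c : ℝ} (h : b ≤ c ∨ c + 1 ≤ a) : icost a b c = b - a := by
  have : min b (c + 1) - max a c ≤ 0 := by
    rcases h with h | h
    · linarith [min_le_left b (c + 1), le_max_right a c]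
    · linarith [min_le_right b (c + 1), le_max_left a c]
  rw [icost, max_eq_left this, sub_zero]

lemma miss_of_sub_le_icost {a b c : ℝ} (hab : a < b) (h : b - a ≤ icost a b c) :
    b ≤ c ∨ c + 1 ≤ a := by
  by_contra! hmeet
  have : max a c < min b (c + 1) :=
    lt_min (max_lt hab hmeet.1) (max_lt hmeet.2 (lt_add_one c))
  unfold icost at h
  linarith [le_max_right 0 (min b (c + 1) - max a c)]

lemma icost_eq_zero_of_cover {a b c : ℝ} (hab : a ≤ b) (hca : c ≤ a) (hbc : b ≤ c + 1) :
    icost a b c = 0 := by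
  rw [icost, min_eq_left hbc, max_eq_left hca, max_eq_right (sub_nonneg.2 hab), sub_self]

/-- A window avoiding `[p, q]` meets at most one of the two margins of `[p - e, q + e]`. -/
lemma sub_add_le_icost_of_miss {p q e c : ℝ} (he : 0 ≤ e) (h : q ≤ c ∨ c + 1 ≤ p) :
    q - p + e ≤ icost (p - e) (q + e) c := by
  have : min (q + e) (c + 1) - max (p - e) c ≤ e := by
    rcases h with h | h
    · linarith [min_le_left (q + e) (c + 1), le_max_right (p - e) c]
    · linarith [min_le_right (q + e) (c + 1), le_max_left (p - e) c]
  unfold icost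
  linarith [max_le he this]

lemma SC2_eq_add (I : Fin 2 → ℝ × ℝ) {i j : Fin 2} (hij : i ≠ j) (c : ℝ) :
    SC2 I c = icost (I i).1 (I i).2 c + icost (I j).1 (I j).2 c :=
  Finset.sum_eq_add i j hij (fun k _ hk => by omega) (by simp) (by simp)

lemma update_valid {I : Fin 2 → ℝ × ℝ} (hI : ∀ k, (I k).1 ≤ (I k).2) (i : Fin 2) {J : ℝ × ℝ}
    (hJ : J.1 ≤ J.2) (k : Fin 2) : (Function.update I i J k).1 ≤ (Function.update I i J k).2 := by
  rcases eq_or_ne k i with rfl | hki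
  · simpa using hJ
  · simpa [Function.update_of_ne hki] using hI k

/-- Her true cost at `f A` is already maximal, so truthfulness keeps it maximal. -/
lemma Truthful2.miss_of_update {f : (Fin 2 → ℝ × ℝ) → ℝ} (hf : Truthful2 f)
    {A : Fin 2 → ℝ × ℝ} (hA : ∀ k, (A k).1 ≤ (A k).2) {i : Fin 2} {p q : ℝ} (hAi : A i = (p, q))
    (hpq : p < q) (hmiss : q ≤ f A ∨ f A + 1 ≤ p) {J : ℝ × ℝ} (hJ : J.1 ≤ J.2) :
    q ≤ f (Function.update A i J) ∨ f (Function.update A i J) + 1 ≤ p := by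
  have htruth := hf A hA i J hJ
  rw [hAi] at htruth
  refine miss_of_sub_le_icost hpq ?_
  rwa [← icost_eq_sub_of_miss hmiss]

lemma Truthful2.exists_profile_of_miss {f : (Fin 2 → ℝ × ℝ) → ℝ} (hf : Truthful2 f)
    {A : Fin 2 → ℝ × ℝ} (hA : ∀ k, (A k).1 ≤ (A k).2) {i j : Fin 2} (hij : i ≠ j)
    {p q r s e : ℝ} (hAi : A i = (p, q)) (hAj : A j = (r, s)) (hpq : p < q) (he : 0 ≤ e)
    (hfit : q + e ≤ p - e + 1) (hfar : s ≤ p - e ∨ p - e + 1 ≤ r)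
    (hmiss : q ≤ f A ∨ f A + 1 ≤ p) :
    ∃ B : Fin 2 → ℝ × ℝ, (∀ k, (B k).1 ≤ (B k).2) ∧
      ∃ c, SC2 B c = s - r ∧ q - p + e ≤ SC2 B (f B) := by
  set B := Function.update A i (p - e, q + e)
  have hJ : (p - e, q + e).1 ≤ (p - e, q + e).2 := by dsimp only; linarith
  have hBi : B i = (p - e, q + e) := Function.update_self ..
  have hBj : B j = (r, s) := (Function.update_of_ne hij.symm _ _).trans hAj
  have hB : ∀ k, (B k).1 ≤ (B k).2 := update_valid hA i hJ
  have hrs : r ≤ s := by simpa only [hBj] using hB j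
  refine ⟨B, hB, p - e, ?_, ?_⟩
  · rw [SC2_eq_add B hij, hBi, hBj, icost_eq_zero_of_cover hJ le_rfl hfit,
      icost_eq_sub_of_miss hfar, zero_add]
  · have hcost := sub_add_le_icost_of_miss he (hf.miss_of_update hA hAi hpq hmiss hJ)
    rw [SC2_eq_add B hij, hBi, hBj]
    linarith [icost_nonneg hrs (f B)]

/-- When interval lengths are unknown (reported by the agents), every deterministic
truthful mechanism for two agents with a unit covering interval has approximation
ratio at least `1/ε` for every `ε ∈ (0, 1)`. -/
theorem unknown_lengths_deterministic_lower_bound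
    (f : (Fin 2 → ℝ × ℝ) → ℝ) (hf : Truthful2 f)
    (ε : ℝ) (hε0 : 0 < ε) (hε1 : ε < 1) :
    ∃ I : Fin 2 → ℝ × ℝ, (∀ i, (I i).1 ≤ (I i).2) ∧
      ∃ c : ℝ, 0 < SC2 I c ∧ (1 / ε) * SC2 I c ≤ SC2 I (f I) := by
  set δ := ε / 4 with hδε
  have hδ : 0 < δ := by positivity
  set A : Fin 2 → ℝ × ℝ := ![(0, δ), (2, 2 + δ)]
  have hA : ∀ k, (A k).1 ≤ (A k).2 := by
    intro k; fin_cases k <;> simp [A] <;> linarith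
  obtain ⟨B, hB, c, hc, hfB⟩ : ∃ B : Fin 2 → ℝ × ℝ, (∀ k, (B k).1 ≤ (B k).2) ∧
      ∃ c, SC2 B c = δ ∧ δ + 1 / 4 ≤ SC2 B (f B) := by
    rcases le_or_gt (f A) 1 with hfA | hfA
    · simpa using hf.exists_profile_of_miss (e := 1 / 4) hA (i := 1) (j := 0) (by decide)
        rfl rfl (by linarith) (by norm_num) (by linarith) (by left; linarith) (by right; linarith)
    · simpa using hf.exists_profile_of_miss (e := 1 / 4) hA (i := 0) (j := 1) (by decide)
        rfl rfl (by linarith) (by norm_num) (by linarith) (by right; linarith) (by left; linarith)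
  refine ⟨B, hB, c, hc ▸ hδ, ?_⟩
  rw [hc, show 1 / ε * δ = 1 / 4 by rw [hδε]; field_simp]
  linarith
end

section
/- For all integers m ≥ 1 and k ≥ 1, consider the known-lengths instance with k agents whose interval is [0, 1] and k·m agents whose interval is [1, 1 + 1/m], and a covering interval of length 1. Then: (i) the total length of the intervals of the first k agents equals exactly half of the total length of all intervals, while the total length of any proper prefix (in left-to-right order) of the first k agents is strictly less than half, so the Weighted-Median mechanism places the covering interval at position 0; (ii) SC(0) = k; (iii) SC(1/m) = k/m > 0. Consequently SC(0) = m · SC(1/m), so the approximation ratio of the Weighted-Median mechanism is at least m; since m is arbitrary, its approximation ratio is unbounded (at least 1/ε for every ε ∈ (0,1) of the form 1/m). -/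
/-!
The `k` long agents carry length `k`, exactly half of the total `2k`, so the median agent is
the last long one and the mechanism covers `[0, 1]`. This leaves all `k·m` short agents, of
total length `k`, uncovered, whereas shifting to `1/m` covers every short agent and leaves only
`1/m` of each long agent uncovered.
-/

open Finset

/-- Left endpoints in the bad instance for Weighted-Median: `k` agents with
interval `[0, 1]` followed by `k·m` agents with interval `[1, 1 + 1/m]`. -/
noncomputable def wmStart (k m : ℕ) : Fin (k + k * m) → ℝ :=
  fun i => if (i : ℕ) < k then 0 else 1

/-- Known interval lengths in the bad instance: `1` for the first `k` agents and
`1/m` for the remaining `k·m` agents. -/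
noncomputable def wmLen (k m : ℕ) : Fin (k + k * m) → ℝ :=
  fun i => if (i : ℕ) < k then 1 else 1 / (m : ℝ)

/-- Cost of agent `i` when the unit covering interval is placed at `c`:
the uncovered length of her interval `[start i, start i + len i]`. -/
noncomputable def wmCost (k m : ℕ) (i : Fin (k + k * m)) (c : ℝ) : ℝ :=
  wmLen k m i - max 0 (min (wmStart k m i + wmLen k m i) (c + 1) - max (wmStart k m i) c)

/-- Social cost of position `c` in the bad instance. -/
noncomputable def wmSC (k m : ℕ) (c : ℝ) : ℝ :=
  ∑ i, wmCost k m i c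

def uncoveredLength (s w c : ℝ) : ℝ :=
  w - max 0 (min (s + w) (c + 1) - max s c)

theorem uncoveredLength_eq_zero {s w c : ℝ} (hw : 0 ≤ w) (hcs : c ≤ s) (hsc : s + w ≤ c + 1) :
    uncoveredLength s w c = 0 := by
  simp only [uncoveredLength, min_eq_left hsc, max_eq_left hcs, add_sub_cancel_left,
    max_eq_right hw, sub_self]

theorem uncoveredLength_eq_self {s w c : ℝ} (hcs : c + 1 ≤ s) :
    uncoveredLength s w c = w := by
  have : min (s + w) (c + 1) - max s c ≤ 0 := by
    linarith [min_le_right (s + w) (c + 1), le_max_left s c]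
  simp only [uncoveredLength, max_eq_left this, sub_zero]

theorem uncoveredLength_eq_sub {s w c : ℝ} (hsc : s ≤ c) (hcw : c ≤ s + w)
    (hwc : s + w ≤ c + 1) : uncoveredLength s w c = c - s := by
  simp only [uncoveredLength, min_eq_left hwc, max_eq_right hsc, max_eq_right (sub_nonneg.2 hcw)]
  ring

theorem sum_fin_add_ite {M : Type*} [AddCommMonoid M] (k l : ℕ) (a b : M) :
    ∑ i : Fin (k + l), (if (i : ℕ) < k then a else b) = k • a + l • b := by
  simp [Fin.sum_univ_add]

theorem wmSC_eq (k m : ℕ) (c : ℝ) :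
    wmSC k m c = k * uncoveredLength 0 1 c + (k * m : ℕ) * uncoveredLength 1 (1 / m) c := by
  have : ∀ i, wmCost k m i c =
      if (i : ℕ) < k then uncoveredLength 0 1 c else uncoveredLength 1 (1 / m) c := by
    intro i
    unfold wmCost wmStart wmLen
    split_ifs <;> rfl
  simp only [wmSC, this, sum_fin_add_ite, nsmul_eq_mul]

theorem sum_wmLen {k m : ℕ} (hm : m ≠ 0) : ∑ i, wmLen k m i = 2 * k := by
  simp only [wmLen, sum_fin_add_ite, nsmul_eq_mul]
  push_cast
  field_simp
  ring

theorem sum_wmLen_filter_val_lt {k m j : ℕ} (hj : j ≤ k) :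
    ∑ i ∈ univ.filter (fun i : Fin (k + k * m) => (i : ℕ) < j), wmLen k m i = j := by
  have hone : ∀ i ∈ univ.filter (fun i : Fin (k + k * m) => (i : ℕ) < j), wmLen k m i = 1 :=
    fun i hi => if_pos ((mem_filter.1 hi).2.trans_le hj)
  rw [sum_congr rfl hone, sum_const, Fin.card_filter_val_lt, min_eq_right (by omega), nsmul_one]

/-- The Weighted-Median mechanism has unbounded approximation ratio for known but
unequal interval lengths. In the instance with `k` agents with interval `[0,1]`
and `k·m` agents with interval `[1, 1 + 1/m]`:
(i) the total length of the first `k` agents is exactly half of the total length,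
every proper prefix of them has total length strictly below half, and hence the
Weighted-Median agent `i*` (the leftmost agent at which the prefix sums of lengths
first reach half of the total) starts at position `0`;
(ii) `SC(0) = k`; (iii) `SC(1/m) = k/m > 0`; and consequently
`SC(0) = m · SC(1/m)`, so the ratio is at least `m`. -/
theorem weighted_median_unbounded (m k : ℕ) (hm : 1 ≤ m) (hk : 1 ≤ k) :
    -- (i) the first k agents carry exactly half the total length ...
    (∑ i ∈ univ.filter (fun i : Fin (k + k * m) => (i : ℕ) < k), wmLen k m i) =
        (1 / 2) * ∑ i, wmLen k m i ∧
    -- ... and every proper prefix of them strictly less than half ...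
    (∀ j : ℕ, j < k →
      (∑ i ∈ univ.filter (fun i : Fin (k + k * m) => (i : ℕ) < j), wmLen k m i) <
        (1 / 2) * ∑ i, wmLen k m i) ∧
    (∃ istar : Fin (k + k * m),
      (1 / 2) * (∑ i, wmLen k m i) ≤
        (∑ i ∈ univ.filter (fun i => i ≤ istar), wmLen k m i) ∧
      (∑ i ∈ univ.filter (fun i => i < istar), wmLen k m i) <
        (1 / 2) * (∑ i, wmLen k m i) ∧
      wmStart k m istar = 0) ∧
    -- (ii) the social cost of the Weighted-Median position 0 is k
    wmSC k m 0 = (k : ℝ) ∧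
    -- (iii) the optimal position 1/m has social cost k/m > 0
    wmSC k m (1 / (m : ℝ)) = (k : ℝ) / (m : ℝ) ∧
    0 < (k : ℝ) / (m : ℝ) ∧
    -- consequently the approximation ratio is at least m
    wmSC k m 0 = (m : ℝ) * wmSC k m (1 / (m : ℝ)) := by
  have hm0 : (0 : ℝ) < m := by exact_mod_cast hm
  have hm1 : 1 / (m : ℝ) ≤ 1 := by rw [div_le_one hm0]; exact_mod_cast hm
  have hinv : 0 ≤ 1 / (m : ℝ) := by positivity
  have htot := sum_wmLen (k := k) (by omega : m ≠ 0)
  have hprefix (j : ℕ) (hj : j < k) :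
      ∑ i ∈ univ.filter (fun i : Fin (k + k * m) => (i : ℕ) < j), wmLen k m i
        < 1 / 2 * ∑ i, wmLen k m i := by
    rw [sum_wmLen_filter_val_lt hj.le, htot]
    linarith [(Nat.cast_lt (α := ℝ)).2 hj]
  have hSC0 : wmSC k m 0 = k := by
    rw [wmSC_eq, uncoveredLength_eq_zero zero_le_one le_rfl (by norm_num),
      uncoveredLength_eq_self (by norm_num)]
    push_cast
    field_simp
    ring
  have hSC1 : wmSC k m (1 / m) = k / m := by
    rw [wmSC_eq, uncoveredLength_eq_sub hinv (by linarith) (by linarith),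
      uncoveredLength_eq_zero hinv hm1 (by linarith)]
    ring
  let istar : Fin (k + k * m) := ⟨k - 1, by omega⟩
  have hle : univ.filter (· ≤ istar) = univ.filter (fun i : Fin (k + k * m) => (i : ℕ) < k) :=
    filter_congr fun i _ => show (i : ℕ) ≤ k - 1 ↔ _ by omega
  have hlt : univ.filter (· < istar) = univ.filter (fun i : Fin (k + k * m) => (i : ℕ) < k - 1) :=
    filter_congr fun i _ => Fin.lt_def
  refine ⟨by rw [sum_wmLen_filter_val_lt le_rfl, htot]; ring, hprefix,
    ⟨istar, ?_, hlt ▸ hprefix (k - 1) (by omega), if_pos (show k - 1 < k by omega)⟩, hSC0, hSC1,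
    by positivity, by rw [hSC0, hSC1]; field_simp⟩
  rw [hle, sum_wmLen_filter_val_lt le_rfl, htot]
  linarith
end
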